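/- arXiv:1410.8150 — 10 statements merged into one kernel-verified Lean document; each statement's English description precedes it below -/
import Mathlib

section
/- For every integer k ≥ 0 and every real number T with T ∉ {0, 1, −1}, the following identity holds: (T^{k+1}/2)·(1/(T−1)^{2k+2} + (−1)^k/(T+1)^{2k+2}) = Σ_{m=0}^{k} 2^{4m−2k} · C(m, k−m) · (T + T⁻¹)/(T − T⁻¹)^{2m+2}, where C(m, k−m) denotes the binomial coefficient (which vanishes when k−m > m). -/
noncomputable def fk (k : ℕ) (u : ℝ) : ℝ :=
  ∑ m ∈ Finset.range (k + 1),
    (2:ℝ)^(4*m) * (m.choose (k-m)) * u * (u^2 - 4)^(k-m)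

lemma fk_rec (k : ℕ) (u : ℝ) :
    fk (k+2) u = 16 * fk (k+1) u + 16*(u^2-4) * fk k u := by
  unfold fk
  rw [Finset.sum_range_succ' _ (k+2)]
  simp only [Nat.choose_eq_zero_of_lt (by omega : (0:ℕ) < k+2-0)]
  rw [Finset.sum_range_succ]
  rw [Finset.sum_range_succ (n := k+1)]
  have h1 : ∀ m ∈ Finset.range (k+1),
      (2:ℝ)^(4*(m+1)) * ((m+1).choose (k+2-(m+1))) * u * (u^2-4)^(k+2-(m+1))
      = 16 * ((2:ℝ)^(4*m) * (m.choose (k+1-m)) * u * (u^2-4)^(k+1-m))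
        + 16*(u^2-4) * ((2:ℝ)^(4*m) * (m.choose (k-m)) * u * (u^2-4)^(k-m)) := by
    intro m hm
    have hmk : m ≤ k := by simpa [Nat.lt_succ_iff] using Finset.mem_range.mp hm
    rw [show k+2-(m+1) = (k-m)+1 by omega, show k+1-m = (k-m)+1 by omega,
      Nat.choose_succ_succ]
    push_cast
    ring
  rw [Finset.sum_congr rfl h1, Finset.sum_add_distrib, ← Finset.mul_sum, ← Finset.mul_sum]
  simp only [Nat.sub_self, Nat.choose_zero_right, pow_zero, Nat.cast_one]
  ring

lemma key2 (k : ℕ) (u : ℝ) :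
    2 * fk k u = 4^k * ((2+u)^(k+1) - (2-u)^(k+1)) := by
  induction k using Nat.twoStepInduction with
  | zero => simp [fk]; ring
  | one => simp [fk, Finset.sum_range_succ]; ring
  | more n ih1 ih2 =>
    rw [fk_rec]
    have : (2:ℝ) * (16 * fk (n+1) u + 16*(u^2-4) * fk n u)
        = 16 * (2 * fk (n+1) u) + 16*(u^2-4) * (2 * fk n u) := by ring
    rw [this, ih1, ih2]
    ring



open Finset

/-- For every integer `k ≥ 0` and every real `T ∉ {0, 1, -1}`,
`(T^(k+1)/2) * (1/(T-1)^(2k+2) + (-1)^k/(T+1)^(2k+2))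
  = ∑_{m=0}^{k} 2^(4m-2k) * C(m, k-m) * (T + T⁻¹)/(T - T⁻¹)^(2m+2)`. -/
theorem stmt0 (k : ℕ) (T : ℝ) (hT0 : T ≠ 0) (hT1 : T ≠ 1) (hT1' : T ≠ -1) :
    T ^ (k + 1) / 2 *
        (1 / (T - 1) ^ (2 * k + 2) + (-1 : ℝ) ^ k / (T + 1) ^ (2 * k + 2)) =
      ∑ m ∈ Finset.range (k + 1),
        (2 : ℝ) ^ ((4 * m : ℤ) - 2 * k) * (m.choose (k - m)) *
          (T + T⁻¹) / (T - T⁻¹) ^ (2 * m + 2) := by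
  have h1 : T - 1 ≠ 0 := sub_ne_zero.mpr hT1
  have h2 : T + 1 ≠ 0 := by intro h; apply hT1'; linarith
  have hDeq : T - T⁻¹ = (T-1)*(T+1)/T := by field_simp; ring
  have hD : T - T⁻¹ ≠ 0 := by
    rw [hDeq]; exact div_ne_zero (mul_ne_zero h1 h2) hT0
  set D : ℝ := T - T⁻¹ with hDdef
  set u : ℝ := T + T⁻¹ with hudef
  have hD2 : D^2 ≠ 0 := pow_ne_zero _ hD
  -- rewrite each summand
  have hsum : ∀ m ∈ Finset.range (k+1),
      (2 : ℝ) ^ ((4 * m : ℤ) - 2 * k) * (m.choose (k - m)) * u / D ^ (2 * m + 2)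
      = ((2:ℝ)^(4*m) * (m.choose (k-m)) * u * (u^2 - 4)^(k-m))
          / (2^(2*k) * (D^2)^(k+1)) := by
    intro m hm
    have hmk : m ≤ k := by simpa [Nat.lt_succ_iff] using Finset.mem_range.mp hm
    have hu2 : u^2 - 4 = D^2 := by
      rw [hudef, hDdef]; field_simp; ring
    have hz : (2:ℝ) ^ ((4 * m : ℤ) - 2 * k) = 2^(4*m) / 2^(2*k) := by
      rw [zpow_sub₀ (by norm_num : (2:ℝ) ≠ 0)]
      rw [← zpow_natCast (2:ℝ) (4*m), ← zpow_natCast (2:ℝ) (2*k)]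
      push_cast
      ring_nf
    have hpow : D ^ (2*m+2) = (D^2)^(m+1) := by
      rw [← pow_mul]; ring_nf
    have hsplit : (D^2)^(k+1) = (D^2)^(m+1) * (D^2)^(k-m) := by
      rw [← pow_add]; congr 1; omega
    rw [hz, hu2, hpow, hsplit]
    have hp1 : ((D:ℝ)^2)^(m+1) ≠ 0 := pow_ne_zero _ hD2
    have hp2 : ((D:ℝ)^2)^(k-m) ≠ 0 := pow_ne_zero _ hD2
    field_simp
  rw [Finset.sum_congr rfl hsum, ← Finset.sum_div]
  have hkey : ∑ m ∈ Finset.range (k+1),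
      (2:ℝ)^(4*m) * (m.choose (k-m)) * u * (u^2 - 4)^(k-m)
      = 4^k * ((2+u)^(k+1) - (2-u)^(k+1)) / 2 := by
    rw [← key2]; unfold fk; ring
  rw [hkey]
  -- now a pure field computation
  have h2u : 2 + u = (T+1)^2/T := by rw [hudef]; field_simp; ring
  have h2u' : 2 - u = -((T-1)^2/T) := by rw [hudef]; field_simp; ring
  have hD2' : D^2 = (T-1)^2*(T+1)^2/T^2 := by rw [hDdef]; field_simp; ring
  rw [h2u, h2u', hD2']
  rw [show 2*k+2 = 2*(k+1) by ring, pow_mul, pow_mul]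
  have e1 : ((T-1)^2)^(k+1) ≠ 0 := pow_ne_zero _ (pow_ne_zero _ h1)
  have e2 : ((T+1)^2)^(k+1) ≠ 0 := pow_ne_zero _ (pow_ne_zero _ h2)
  have e3 : (T:ℝ)^(k+1) ≠ 0 := pow_ne_zero _ hT0
  have hneg : (-((T-1)^2/T))^(k+1) = (-1)^(k+1) * (((T-1)^2)^(k+1) / T^(k+1)) := by
    rw [neg_pow, div_pow]
  rw [hneg, div_pow, div_pow, mul_pow,
    show (4:ℝ)^k = 2^(2*k) by rw [show (4:ℝ) = 2^2 by norm_num, ← pow_mul]]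
  field_simp
  ring
end

section
/- For every integer n ≥ 0, the polynomial identity (T+1)^{4n+2} + (T−1)^{4n+2} = 2(T²+1) · Σ_{q=0}^{n} C(n+q, n−q) · (4T)^{2q} · (T²−1)^{2n−2q} holds in the polynomial ring ℤ[T] (equivalently, for all real T). -/
/-!
Put `x = (T+1)²` and `y = (T-1)²`, so that `x + y = 2(T²+1)`, `(x - y)² = (4T)²` and
`xy = (T²-1)²`. The identity becomes `x^(2n+1) + y^(2n+1) = (x + y) bₙ((x - y)², xy)` for the
homogenised Morgan–Voyce polynomial `bₙ`. Together with its companion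
`x^(2n+2) - y^(2n+2) = (x + y)(x - y) Bₙ((x - y)², xy)` it follows by induction on `n`: with
`z = (x - y)²` and `w = xy`, both pairs satisfy `b_{n+1} = z Bₙ + w bₙ` and
`B_{n+1} = b_{n+1} + w Bₙ`, on the power side by expanding, on the polynomial side by Pascal's rule.
-/

open Polynomial Finset

namespace MorganVoyce

variable {R : Type*} [CommRing R] (z w : R)

noncomputable def b (n : ℕ) : R :=
  ∑ p ∈ antidiagonal n, ((2 * p.1 + p.2).choose p.2 : R) * z ^ p.1 * w ^ p.2

noncomputable def B (n : ℕ) : R :=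
  ∑ p ∈ antidiagonal n, ((2 * p.1 + p.2 + 1).choose p.2 : R) * z ^ p.1 * w ^ p.2

theorem b_eq_sum_range (n : ℕ) :
    b z w n = ∑ q ∈ range (n + 1), ((n + q).choose (n - q) : R) * z ^ q * w ^ (n - q) := by
  rw [b, Nat.sum_antidiagonal_eq_sum_range_succ_mk]
  refine sum_congr rfl fun q hq => ?_
  rw [show 2 * q + (n - q) = n + q by grind]

theorem B_succ (n : ℕ) : B z w (n + 1) = b z w (n + 1) + w * B z w n := by
  rw [B, b, B, Nat.sum_antidiagonal_succ', Nat.sum_antidiagonal_succ', mul_sum,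
    add_assoc (G := R), ← sum_add_distrib]
  refine congrArg₂ (· + ·) (by simp) (sum_congr rfl fun p _ => ?_)
  rw [show 2 * p.1 + (p.2 + 1) = 2 * p.1 + p.2 + 1 by ring, Nat.choose_succ_succ']
  push_cast
  ring

theorem mul_B (n : ℕ) :
    z * B z w n = z ^ (n + 1) +
      ∑ p ∈ antidiagonal n, ((2 * p.1 + p.2).choose (p.2 + 1) : R) * z ^ p.1 * w ^ (p.2 + 1) := by
  -- the subtraction never truncates: `f` is only evaluated on `antidiagonal (n + 1)`
  set f : ℕ × ℕ → R := fun p => ((2 * p.1 + p.2 - 1).choose p.2 : R) * z ^ p.1 * w ^ p.2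
  calc z * B z w n = ∑ p ∈ antidiagonal n, f (p.1 + 1, p.2) := by
        rw [B, mul_sum]
        refine sum_congr rfl fun p _ => ?_
        simp only [f, show 2 * (p.1 + 1) + p.2 - 1 = 2 * p.1 + p.2 + 1 by omega]
        ring
    _ = ∑ p ∈ antidiagonal (n + 1), f p := by
        rw [Nat.sum_antidiagonal_succ]
        simp [f]
    _ = _ := by
        rw [Nat.sum_antidiagonal_succ']
        simp [f]

theorem b_succ (n : ℕ) : b z w (n + 1) = z * B z w n + w * b z w n := by
  rw [mul_B, b, b, Nat.sum_antidiagonal_succ', mul_sum, add_assoc (G := R), ← sum_add_distrib]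
  refine congrArg₂ (· + ·) (by simp) (sum_congr rfl fun p _ => ?_)
  rw [show 2 * p.1 + (p.2 + 1) = 2 * p.1 + p.2 + 1 by ring, Nat.choose_succ_succ']
  push_cast
  ring

theorem pow_add_pow_eq_mul_b_and_pow_sub_pow_eq_mul_B (x y : R) (n : ℕ) :
    x ^ (2 * n + 1) + y ^ (2 * n + 1) = (x + y) * b ((x - y) ^ 2) (x * y) n ∧
      x ^ (2 * n + 2) - y ^ (2 * n + 2) = (x + y) * (x - y) * B ((x - y) ^ 2) (x * y) n := by
  induction n with
  | zero => simp [b, B, sq_sub_sq]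
  | succ n ih =>
    obtain ⟨hb, hB⟩ := ih
    have hb' : x ^ (2 * (n + 1) + 1) + y ^ (2 * (n + 1) + 1) =
        (x + y) * b ((x - y) ^ 2) (x * y) (n + 1) := by
      rw [b_succ]
      linear_combination (x - y) * hB + x * y * hb
    refine ⟨hb', ?_⟩
    rw [B_succ]
    linear_combination (x - y) * hb' + x * y * hB

end MorganVoyce

/-- For every integer `n ≥ 0`, in `ℤ[T]`:
`(T+1)^(4n+2) + (T-1)^(4n+2)
  = 2(T²+1) · ∑_{q=0}^{n} C(n+q, n-q) (4T)^(2q) (T²-1)^(2n-2q)`. -/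
theorem stmt1 (n : ℕ) :
    (X + 1 : ℤ[X]) ^ (4 * n + 2) + (X - 1) ^ (4 * n + 2) =
      2 * (X ^ 2 + 1) *
        ∑ q ∈ Finset.range (n + 1),
          (C ((n + q).choose (n - q) : ℤ)) * (4 * X) ^ (2 * q) *
            (X ^ 2 - 1) ^ (2 * n - 2 * q) := by
  have h := (MorganVoyce.pow_add_pow_eq_mul_b_and_pow_sub_pow_eq_mul_B
    ((X + 1 : ℤ[X]) ^ 2) ((X - 1) ^ 2) n).1
  rw [← pow_mul, ← pow_mul, MorganVoyce.b_eq_sum_range] at h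
  rw [show 4 * n + 2 = 2 * (2 * n + 1) by ring, h,
    show (X + 1 : ℤ[X]) ^ 2 + (X - 1) ^ 2 = 2 * (X ^ 2 + 1) by ring]
  refine congrArg _ (sum_congr rfl fun q _ => ?_)
  rw [map_natCast, pow_mul, ← Nat.mul_sub, pow_mul]
  ring
end

section
/- Define a sequence of functions g_m : ℝ → ℝ recursively by g_0(T) = 1/T and g_{m+1}(T) = −(d/dT)[ g_m(T) / (1 − T⁻²) ]. Then for every integer m ≥ 0 and every real T with T ∉ {0, 1, −1}: g_m(T) = (m!/(T − T⁻¹)^{2m}) · Σ_{l=0}^{m} C(m,l)² · T^{2l−m−1}. -/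
open Finset

/-- The sequence `g_m : ℝ → ℝ` defined by `g_0(T) = 1/T` and
`g_{m+1}(T) = -(d/dT)[ g_m(T) / (1 - T⁻²) ]`. -/
noncomputable def g : ℕ → ℝ → ℝ
  | 0 => fun T => 1 / T
  | m + 1 => fun T => -deriv (fun s => g m s / (1 - s⁻¹ ^ 2)) T

/-!
Clearing the powers of `T` turns the claim into `g m T = m! N_m(T) / (T² (T² - 1)^(2m))` with
`N_m(T) = gNum m T = ∑ C(m,l)² T^(2l+m+1)`. Since `1 - T⁻² = (T² - 1)/T²`, the recursion asks for
the derivative of `m! N_m / (T² - 1)^(2m+1)`, and the induction step reduces to the polynomial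
identity `T² ((4m+2) T N_m - (T² - 1) N_m') = (m+1) N_{m+1}`. Comparing coefficients of
`T^(2l+m+4)`, this is `C(m,l)² (3m+1-2l) + C(m,l+1)² (2l+m+3) = (m+1) C(m+1,l+1)²`, which
follows from Pascal's rule and `(l+1) C(m,l+1) = (m-l) C(m,l)`.
-/

noncomputable def gNum (m : ℕ) (s : ℝ) : ℝ :=
  ∑ l ∈ range (m + 1), (m.choose l : ℝ) ^ 2 * s ^ (2 * l + m + 1)

noncomputable def gNumDeriv (m : ℕ) (s : ℝ) : ℝ :=
  ∑ l ∈ range (m + 1), (m.choose l : ℝ) ^ 2 * (2 * l + m + 1) * s ^ (2 * l + m)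

lemma hasDerivAt_gNum (m : ℕ) (s : ℝ) : HasDerivAt (gNum m) (gNumDeriv m s) s := by
  unfold gNum gNumDeriv
  refine HasDerivAt.fun_sum fun l _ => ?_
  refine ((hasDerivAt_pow (2 * l + m + 1) s).const_mul ((m.choose l : ℝ) ^ 2)).congr_deriv ?_
  rw [Nat.add_sub_cancel]
  push_cast
  ring

lemma cast_choose_succ_mul (m l : ℕ) :
    (m.choose (l + 1) : ℝ) * (l + 1) = m.choose l * (m - l) := by
  rcases le_or_gt l m with hl | hl
  · have h := congrArg (Nat.cast (R := ℝ)) (Nat.choose_succ_right_eq m l)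
    push_cast [Nat.cast_sub hl] at h
    exact h
  · simp [Nat.choose_eq_zero_of_lt hl, Nat.choose_eq_zero_of_lt (hl.trans (Nat.lt_succ_self l))]

lemma cast_choose_sq_add_choose_succ_sq (m l : ℕ) :
    (m.choose l : ℝ) ^ 2 * (3 * m + 1 - 2 * l) + (m.choose (l + 1) : ℝ) ^ 2 * (2 * l + m + 3)
      = (m + 1) * ((m + 1).choose (l + 1) : ℝ) ^ 2 := by
  rw [Nat.choose_succ_succ]
  push_cast
  linear_combination (2 * (m.choose (l + 1) : ℝ) - 2 * m.choose l) * cast_choose_succ_mul m l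

lemma gNum_succ (m : ℕ) (T : ℝ) :
    (m + 1) * gNum (m + 1) T
      = T ^ 2 * ((4 * m + 2) * T * gNum m T - (T ^ 2 - 1) * gNumDeriv m T) := by
  have hexpand : T ^ 2 * ((4 * m + 2) * T * gNum m T - (T ^ 2 - 1) * gNumDeriv m T)
      = ∑ l ∈ range (m + 1), (m.choose l : ℝ) ^ 2 * (3 * m + 1 - 2 * l) * T ^ (2 * l + m + 4)
        + ∑ l ∈ range (m + 2), (m.choose l : ℝ) ^ 2 * (2 * l + m + 1) * T ^ (2 * l + m + 2) := by
    rw [sum_range_succ (n := m + 1), Nat.choose_succ_self, Nat.cast_zero, zero_pow two_ne_zero,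
      zero_mul, zero_mul, add_zero, ← sum_add_distrib]
    simp only [gNum, gNumDeriv, mul_sum, ← sum_sub_distrib]
    refine sum_congr rfl fun l _ => ?_
    ring
  rw [hexpand, gNum, sum_range_succ', sum_range_succ' _ (m + 1), mul_add, mul_sum,
    ← add_assoc (∑ l ∈ range (m + 1), _), ← sum_add_distrib]
  congr 1
  · refine sum_congr rfl fun l _ => ?_
    push_cast
    linear_combination -T ^ (2 * l + m + 4) * cast_choose_sq_add_choose_succ_sq m l
  · simp

lemma hasDerivAt_gNum_div (m : ℕ) {T : ℝ} (hT : T ≠ 0) (hT2 : T ^ 2 - 1 ≠ 0) :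
    HasDerivAt (fun s => gNum m s / (s ^ 2 - 1) ^ (2 * m + 1))
      (-((m + 1) * gNum (m + 1) T / (T ^ 2 * (T ^ 2 - 1) ^ (2 * m + 2)))) T := by
  have hden : HasDerivAt (fun s : ℝ => (s ^ 2 - 1) ^ (2 * m + 1))
      ((2 * m + 1 : ℕ) * (T ^ 2 - 1) ^ (2 * m) * (2 * T)) T := by
    simpa using ((hasDerivAt_pow 2 T).sub_const 1).fun_pow (2 * m + 1)
  refine ((hasDerivAt_gNum m T).fun_div hden (pow_ne_zero _ hT2)).congr_deriv ?_
  rw [gNum_succ]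
  field_simp
  push_cast
  ring

lemma g_eq_gNum (m : ℕ) {T : ℝ} (hT : T ≠ 0) (hT2 : T ^ 2 - 1 ≠ 0) :
    g m T = m.factorial * gNum m T / (T ^ 2 * (T ^ 2 - 1) ^ (2 * m)) := by
  induction m generalizing T with
  | zero =>
    simp [g, gNum, field]
  | succ m ih =>
    have hquot : (fun s => g m s / (1 - s⁻¹ ^ 2)) =ᶠ[nhds T]
        fun s => m.factorial * (gNum m s / (s ^ 2 - 1) ^ (2 * m + 1)) := by
      have hT2' : ∀ᶠ s in nhds T, s ^ 2 - 1 ≠ 0 :=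
        (by fun_prop : Continuous fun s : ℝ => s ^ 2 - 1).continuousAt.eventually_ne hT2
      filter_upwards [eventually_ne_nhds hT, hT2'] with s hs hs2
      rw [ih hs hs2]
      field_simp
      ring
    dsimp only [g]
    rw [hquot.deriv_eq, ((hasDerivAt_gNum_div m hT hT2).const_mul _).deriv,
      Nat.factorial_succ]
    push_cast
    ring

/-- For every `m ≥ 0` and real `T ∉ {0, 1, -1}`:
`g m T = (m!/(T - T⁻¹)^(2m)) · ∑_{l=0}^{m} C(m,l)² T^(2l-m-1)`. -/
theorem stmt3 (m : ℕ) (T : ℝ) (hT0 : T ≠ 0) (hT1 : T ≠ 1) (hT1' : T ≠ -1) :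
    g m T =
      (m.factorial : ℝ) / (T - T⁻¹) ^ (2 * m) *
        ∑ l ∈ Finset.range (m + 1),
          ((m.choose l : ℝ)) ^ 2 * T ^ ((2 * l : ℤ) - m - 1) := by
  have hT2 : T ^ 2 - 1 ≠ 0 := by
    rw [sub_ne_zero, Ne, sq_eq_one_iff]
    tauto
  have hpow (l : ℕ) : T ^ ((2 * l : ℤ) - m - 1) = T ^ (2 * l + m + 1) / T ^ (2 * m + 2) := by
    rw [← zpow_natCast, ← zpow_natCast, ← zpow_sub₀ hT0]
    push_cast
    ring_nf
  simp_rw [hpow, mul_div_assoc', ← Finset.sum_div, g_eq_gNum m hT0 hT2, gNum]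
  rw [show T - T⁻¹ = (T ^ 2 - 1) / T by field_simp, div_pow]
  field_simp
  ring
end

section
/- For all integers m ≥ 0 and 0 ≤ l ≤ m, the binomial coefficient identity (3m − 2l + 1)·C(m,l)² + (2l + m + 3)·C(m,l+1)² = (m+1)·C(m+1,l+1)² holds. -/
/-- For all integers `0 ≤ l ≤ m`:
`(3m - 2l + 1)·C(m,l)² + (2l + m + 3)·C(m,l+1)² = (m+1)·C(m+1,l+1)²`. -/
theorem stmt5 (m l : ℕ) (hl : l ≤ m) :
    (3 * (m : ℤ) - 2 * l + 1) * (m.choose l : ℤ) ^ 2 +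
        (2 * (l : ℤ) + m + 3) * (m.choose (l + 1) : ℤ) ^ 2 =
      ((m : ℤ) + 1) * ((m + 1).choose (l + 1) : ℤ) ^ 2 := by
  have hk : (m.choose (l + 1) : ℤ) * (l + 1) = (m.choose l : ℤ) * ((m : ℤ) - l) := by
    have h := Nat.choose_succ_right_eq m l
    have h2 := congrArg (Nat.cast : ℕ → ℤ) h
    push_cast [Nat.cast_sub hl] at h2
    linarith
  have hp : ((m + 1).choose (l + 1) : ℤ) = (m.choose l : ℤ) + (m.choose (l + 1) : ℤ) := by
    rw [Nat.choose_succ_succ]; push_cast; ring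
  linear_combination (-2) * ((m.choose l : ℤ) - (m.choose (l+1) : ℤ)) * hk - ((m:ℤ)+1) * (((m+1).choose (l+1) : ℤ) + (m.choose l : ℤ) + (m.choose (l+1) : ℤ)) * hp
end

section
/- For every integer m ≥ 1, the alternating sum Σ_{l=0}^{m−1} (−1)^l · C(m−1,l) · C(m+1,l+1) equals 0 if m is even, and equals (−1)^{(m−1)/2} · 2^m · (m−2)!!/(m−1)!! if m is odd. -/
open Finset Polynomial Nat

private lemma sign_sub (n k : ℕ) (h : k ≤ n) :
    (-1 : ℚ) ^ (n - k) = (-1) ^ n * (-1) ^ k := by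
  have h2 : n - k + k = n := Nat.sub_add_cancel h
  have : (-1 : ℚ) ^ (n - k) * (-1) ^ k = (-1) ^ n := by rw [← pow_add, h2]
  have hk : (-1 : ℚ) ^ k * (-1) ^ k = 1 := by
    rw [← pow_add, ← two_mul, pow_mul, neg_one_sq, one_pow]
  calc (-1 : ℚ) ^ (n - k) = (-1 : ℚ) ^ (n - k) * ((-1) ^ k * (-1) ^ k) := by rw [hk, mul_one]
    _ = ((-1 : ℚ) ^ (n - k) * (-1) ^ k) * (-1) ^ k := by ring
    _ = (-1) ^ n * (-1) ^ k := by rw [this]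

private lemma coeff_one_sub_X_pow (n k : ℕ) :
    ((1 - X : ℚ[X]) ^ n).coeff k = (-1) ^ k * (n.choose k : ℚ) := by
  have h : (1 - X : ℚ[X]) = -(X + C (-1)) := by
    rw [map_neg, C_1]; ring
  rw [h, neg_pow, show ((-1 : ℚ[X]) ^ n) = C ((-1 : ℚ) ^ n) by
    rw [map_pow, map_neg, C_1], coeff_C_mul, coeff_X_add_C_pow]
  rcases le_or_gt k n with hk | hk
  · rw [sign_sub n k hk]
    have hn : (-1 : ℚ) ^ n * (-1) ^ n = 1 := by
      rw [← pow_add, ← two_mul, pow_mul, neg_one_sq, one_pow]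
    linear_combination ((n.choose k : ℚ) * (-1 : ℚ) ^ k) * hn
  · rw [Nat.choose_eq_zero_of_lt hk]; simp

private lemma expand_q (n : ℕ) :
    (1 - X ^ 2 : ℚ[X]) ^ n =
      ∑ j ∈ range (n + 1), C ((-1) ^ j * (n.choose j : ℚ)) * X ^ (2 * j) := by
  rw [show (1 - X ^ 2 : ℚ[X]) = -(X ^ 2) + 1 by ring, add_pow]
  refine Finset.sum_congr rfl fun j hj => ?_
  rw [one_pow, mul_one, neg_pow, map_mul, map_pow, map_neg, C_1, C_eq_natCast, ← pow_mul]
  ring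

private lemma coeff_q_even (n j : ℕ) :
    ((1 - X ^ 2 : ℚ[X]) ^ n).coeff (2 * j) = (-1) ^ j * (n.choose j : ℚ) := by
  rw [expand_q, finset_sum_coeff]
  simp only [coeff_C_mul, coeff_X_pow]
  rw [Finset.sum_eq_single j]
  · simp
  · intro b _ hbj
    have h2 : ¬ (2 * j = 2 * b) := by omega
    rw [if_neg h2, mul_zero]
  · intro hj
    have : n < j := by simpa using hj
    simp [Nat.choose_eq_zero_of_lt this]

private lemma coeff_q_odd (n j : ℕ) :
    ((1 - X ^ 2 : ℚ[X]) ^ n).coeff (2 * j + 1) = 0 := by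
  rw [expand_q, finset_sum_coeff]
  refine Finset.sum_eq_zero fun b _ => ?_
  rw [coeff_C_mul, coeff_X_pow]
  have h2 : ¬ (2 * j + 1 = 2 * b) := by omega
  rw [if_neg h2, mul_zero]

private lemma sum_eq_coeff (m : ℕ) (hm : 1 ≤ m) :
    ∑ l ∈ Finset.range m,
        (-1 : ℚ) ^ l * ((m - 1).choose l : ℚ) * ((m + 1).choose (l + 1) : ℚ) =
      (((1 - X : ℚ[X]) ^ (m - 1) * (1 + X) ^ (m + 1))).coeff m := by
  rw [coeff_mul, Finset.Nat.sum_antidiagonal_eq_sum_range_succ_mk, Finset.sum_range_succ]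
  have hlast : ((1 - X : ℚ[X]) ^ (m - 1)).coeff m * ((1 + X : ℚ[X]) ^ (m + 1)).coeff (m - m) = 0 := by
    rw [coeff_one_sub_X_pow, Nat.choose_eq_zero_of_lt (by omega)]
    simp
  rw [hlast, add_zero]
  refine Finset.sum_congr rfl fun l hl => ?_
  have hl' : l < m := Finset.mem_range.mp hl
  rw [coeff_one_sub_X_pow, coeff_one_add_X_pow]
  have hsym : (m + 1).choose (m - l) = (m + 1).choose (l + 1) := by
    rw [show m - l = (m + 1) - (l + 1) by omega]
    exact Nat.choose_symm (by omega)
  rw [hsym]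

private lemma factorization' (m : ℕ) (hm : 1 ≤ m) :
    ((1 - X : ℚ[X]) ^ (m - 1) * (1 + X) ^ (m + 1)) =
      (1 - X ^ 2 : ℚ[X]) ^ (m - 1) * (1 + X) ^ 2 := by
  have h : m + 1 = (m - 1) + 2 := by omega
  rw [h, pow_add, ← mul_assoc, ← mul_pow]
  have : ((1 - X) * (1 + X) : ℚ[X]) = 1 - X ^ 2 := by ring
  rw [this]

private lemma coeff_prod (q : ℚ[X]) (k : ℕ) :
    (q * (1 + X) ^ 2).coeff (k + 2) =
      q.coeff (k + 2) + 2 * q.coeff (k + 1) + q.coeff k := by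
  have h : q * (1 + X) ^ 2 = q + (X * q + X * q) + X ^ 2 * q := by ring
  rw [h, coeff_add, coeff_add, coeff_add, show k + 2 = (k + 1) + 1 from rfl, coeff_X_mul,
    show (k + 1) + 1 = k + 2 from rfl, coeff_X_pow_mul q 2 k]
  ring

private lemma central (n : ℕ) :
    ((2 * n + 2).choose (n + 1) : ℚ) * ((2 * n + 2).doubleFactorial : ℚ) =
      2 ^ (2 * n + 2) * ((2 * n + 1).doubleFactorial : ℚ) := by
  have h1 : (2 * n + 2)! = (2 * n + 2).doubleFactorial * (2 * n + 1).doubleFactorial := by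
    have := Nat.factorial_eq_mul_doubleFactorial (2 * n + 1)
    simpa using this
  have h2 : (2 * n + 2).doubleFactorial = 2 ^ (n + 1) * (n + 1)! := by
    have := Nat.doubleFactorial_two_mul (n + 1)
    rw [show 2 * (n + 1) = 2 * n + 2 by ring] at this
    exact this
  have h3 : (2 * n + 2).choose (n + 1) * ((n + 1)! * (n + 1)!) = (2 * n + 2)! := by
    have := Nat.choose_mul_factorial_mul_factorial (show n + 1 ≤ 2 * n + 2 by omega)
    rw [show 2 * n + 2 - (n + 1) = n + 1 by omega] at this
    rw [← mul_assoc]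
    exact this
  have q1 : ((2 * n + 2)! : ℚ) =
      ((2 * n + 2).doubleFactorial : ℚ) * ((2 * n + 1).doubleFactorial : ℚ) := by
    exact_mod_cast congrArg (Nat.cast : ℕ → ℚ) h1
  have q2 : ((2 * n + 2).doubleFactorial : ℚ) = 2 ^ (n + 1) * ((n + 1)! : ℚ) := by
    exact_mod_cast congrArg (Nat.cast : ℕ → ℚ) h2
  have q3 : ((2 * n + 2).choose (n + 1) : ℚ) * (((n + 1)! : ℚ) * ((n + 1)! : ℚ)) =
      ((2 * n + 2)! : ℚ) := by
    exact_mod_cast congrArg (Nat.cast : ℕ → ℚ) h3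
  have hg : ((n + 1)! : ℚ) ≠ 0 := by
    exact_mod_cast Nat.factorial_pos (n + 1) |>.ne'
  rw [q2] at q1 ⊢
  have q4 : ((2 * n + 2).choose (n + 1) : ℚ) * (((n + 1)! : ℚ) * ((n + 1)! : ℚ)) =
      2 ^ (n + 1) * ((n + 1)! : ℚ) * ((2 * n + 1).doubleFactorial : ℚ) := q3.trans q1
  apply mul_right_cancel₀ hg
  calc ((2 * n + 2).choose (n + 1) : ℚ) * (2 ^ (n + 1) * ((n + 1)! : ℚ)) * ((n + 1)! : ℚ)
      = 2 ^ (n + 1) * (((2 * n + 2).choose (n + 1) : ℚ) * (((n + 1)! : ℚ) * ((n + 1)! : ℚ))) := by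
        ring
    _ = 2 ^ (n + 1) * (2 ^ (n + 1) * ((n + 1)! : ℚ) * ((2 * n + 1).doubleFactorial : ℚ)) := by
        rw [q4]
    _ = 2 ^ (2 * n + 2) * ((2 * n + 1).doubleFactorial : ℚ) * ((n + 1)! : ℚ) := by
        rw [show 2 * n + 2 = (n + 1) + (n + 1) by ring, pow_add]; ring

/-- For every integer `m ≥ 1`,
`∑_{l=0}^{m-1} (-1)^l C(m-1,l) C(m+1,l+1)` is `0` if `m` is even and
`(-1)^((m-1)/2) · 2^m · (m-2)!!/(m-1)!!` if `m` is odd. -/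
theorem stmt7 (m : ℕ) (hm : 1 ≤ m) :
    ∑ l ∈ Finset.range m,
        (-1 : ℚ) ^ l * ((m - 1).choose l : ℚ) * ((m + 1).choose (l + 1) : ℚ) =
      if Even m then 0
      else (-1 : ℚ) ^ ((m - 1) / 2) * 2 ^ m *
        (Nat.doubleFactorial (m - 2) : ℚ) / (Nat.doubleFactorial (m - 1) : ℚ) := by
  rcases eq_or_lt_of_le hm with h1 | h2
  · -- m = 1
    subst_vars
    norm_num [Finset.sum_range_one]
  · -- m ≥ 2
    rw [sum_eq_coeff m hm, factorization' m hm]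
    have hk : ∃ k, m = k + 2 := ⟨m - 2, by omega⟩
    obtain ⟨k, rfl⟩ := hk
    rw [coeff_prod]
    rcases Nat.even_or_odd k with hke | hko
    · -- k even, m = k + 2 even
      obtain ⟨n, rfl⟩ : ∃ n, k = 2 * n := by
        obtain ⟨r, hr⟩ := hke; exact ⟨r, by omega⟩
      have hEven : Even (2 * n + 2) := ⟨n + 1, by ring⟩
      rw [if_pos hEven]
      rw [show 2 * n + 2 - 1 = 2 * n + 1 by omega,
        show 2 * n + 2 = 2 * (n + 1) by ring, coeff_q_even, coeff_q_odd, coeff_q_even,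
        Nat.choose_symm_half]
      ring_nf
    · -- k odd, m = k + 2 odd
      obtain ⟨t, rfl⟩ := hko
      have hOdd : ¬ Even (2 * t + 1 + 2) := by
        simp [Nat.even_add_one, parity_simps]
      rw [if_neg hOdd]
      rw [show 2 * t + 1 + 2 - 1 = 2 * (t + 1) by omega,
        show 2 * t + 1 + 2 = 2 * (t + 1) + 1 by ring,
        show 2 * t + 1 + 1 = 2 * (t + 1) by ring,
        coeff_q_odd, coeff_q_even, coeff_q_odd _ t,
        show 2 * (t + 1) / 2 = t + 1 by omega,
        show 2 * (t + 1) + 1 - 2 = 2 * t + 1 by omega,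
        show (2 * (t + 1) : ℕ) = 2 * t + 2 by ring]
      have hD : ((2 * t + 2).doubleFactorial : ℚ) =
          (2 * t + 2) * ((2 * t).doubleFactorial : ℚ) := by
        rw [Nat.doubleFactorial_add_two]; push_cast; ring
      have hc := central t
      rw [hD] at hc ⊢
      have hden : ((2 * t + 2 : ℚ)) * ((2 * t).doubleFactorial : ℚ) ≠ 0 := by
        rw [← hD]
        exact_mod_cast (Nat.doubleFactorial_pos (2 * t + 2)).ne'
      field_simp
      linear_combination (2 * (-1 : ℚ) ^ (t + 1)) * hc
end

section
/- For an integer m ≥ 1 define the rational functions φ̃_m(T) = (m!/(T − T⁻¹)^{2m}) · Σ_{l=0}^{m} C(m,l)² T^{2l−m} and ψ̃_m(T) = (m!/(T − T⁻¹)^{2m}) · Σ_{l=0}^{m−1} C(m−1,l) C(m+1,l+1) T^{2l+1−m}, regarded as elements of the field ℚ(T) of rational functions over ℚ. Then for every integer k ≥ 1, the family of 2k rational functions {φ̃_1, …, φ̃_k, ψ̃_1, …, ψ̃_k} is linearly independent over ℚ. -/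
open Finset

/-- The rational function
`φ̃_m(T) = (m!/(T - T⁻¹)^(2m)) · ∑_{l=0}^{m} C(m,l)² T^(2l-m)` in `ℚ(T)`. -/
noncomputable def phiTilde (m : ℕ) : RatFunc ℚ :=
  (m.factorial : RatFunc ℚ) / (RatFunc.X - RatFunc.X⁻¹) ^ (2 * m) *
    ∑ l ∈ Finset.range (m + 1),
      ((m.choose l : RatFunc ℚ)) ^ 2 * RatFunc.X ^ ((2 * l : ℤ) - m)

/-- The rational function
`ψ̃_m(T) = (m!/(T - T⁻¹)^(2m)) · ∑_{l=0}^{m-1} C(m-1,l) C(m+1,l+1) T^(2l+1-m)`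
in `ℚ(T)`. -/
noncomputable def psiTilde (m : ℕ) : RatFunc ℚ :=
  (m.factorial : RatFunc ℚ) / (RatFunc.X - RatFunc.X⁻¹) ^ (2 * m) *
    ∑ l ∈ Finset.range m,
      ((m - 1).choose l : RatFunc ℚ) * ((m + 1).choose (l + 1) : RatFunc ℚ) *
        RatFunc.X ^ ((2 * l : ℤ) + 1 - m)

/-!
Clearing denominators, `φ̃_m = p_m / (T² - 1)^(2m)` and `ψ̃_m = q_m / (T² - 1)^(2m)` with
polynomials `p_m = phiNum m`, `q_m = psiNum m` of parity `m` and `m + 1` whose values at `1` are positive. Multiply a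
vanishing combination `∑_{m ≤ K} (a_m φ̃_m + b_m ψ̃_m)` by `(T² - 1)^(2K)` and evaluate at `T = ±1`:
only the top index survives, giving `a_K p_K(1) ± b_K q_K(1) = 0` with both signs, so
`a_K = b_K = 0`, and the claim follows by induction on `K`.
-/

open Polynomial

theorem zpow_sub_div_sub_inv_pow {F : Type*} [Field F] {x : F} (hx : x ≠ 0) (n m : ℕ) :
    x ^ ((n : ℤ) - m) / (x - x⁻¹) ^ (2 * m) = x ^ (n + m) / ((x ^ 2 - 1) ^ 2) ^ m := by
  have hsub : x - x⁻¹ = (x ^ 2 - 1) / x := by field_simp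
  rw [hsub, div_pow, ← pow_mul, div_div_eq_mul_div, zpow_sub₀ hx, zpow_natCast, zpow_natCast,
    mul_comm 2 m, pow_mul]
  field_simp
  ring

theorem eval_neg_sum_C_mul_X_pow {R : Type*} [CommRing R] (s : Finset ℕ) (c : ℕ → R) (n : ℕ)
    (t : R) :
    (∑ l ∈ s, C (c l) * X ^ (2 * l + n)).eval (-t) =
      (-1) ^ n * (∑ l ∈ s, C (c l) * X ^ (2 * l + n)).eval t := by
  simp only [eval_finsetSum, eval_mul, eval_C, eval_pow, eval_X, mul_sum, pow_add, pow_mul,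
    neg_sq, neg_pow t]
  exact sum_congr rfl fun _ _ => by ring

theorem eval_last_eq_zero_of_sum_div_pow_eq_zero {k : Type*} [Field k] {K : ℕ}
    (P : Fin (K + 1) → k[X]) {d : k[X]} (hd : d ≠ 0)
    (h : ∑ i, algebraMap k[X] (RatFunc k) (P i) / algebraMap k[X] (RatFunc k) d ^ ((i : ℕ) + 1)
      = 0)
    {t : k} (ht : d.eval t = 0) : (P (Fin.last K)).eval t = 0 := by
  have hd' : algebraMap k[X] (RatFunc k) d ≠ 0 :=
    (map_ne_zero_iff _ (RatFunc.algebraMap_injective k)).2 hd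
  have hpoly : ∑ i : Fin (K + 1), d ^ (K - (i : ℕ)) * P i = 0 := by
    apply RatFunc.algebraMap_injective k
    rw [map_zero, ← mul_zero (algebraMap k[X] (RatFunc k) d ^ (K + 1)), ← h, mul_sum, map_sum]
    refine sum_congr rfl fun i _ => ?_
    rw [map_mul, map_pow, mul_div_assoc', eq_div_iff (pow_ne_zero _ hd'), mul_comm, ← mul_assoc,
      ← pow_add, show (i : ℕ) + 1 + (K - i) = K + 1 by omega]
  have := congrArg (eval t) hpoly
  rw [Fin.sum_univ_castSucc, eval_add, eval_finsetSum] at this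
  simpa [ht, zero_pow (Nat.sub_ne_zero_of_lt (Fin.is_lt _))] using this

noncomputable def phiNum (m : ℕ) : ℚ[X] :=
  ∑ l ∈ range (m + 1), C ((m.factorial : ℚ) * (m.choose l : ℚ) ^ 2) * X ^ (2 * l + m)

noncomputable def psiNum (m : ℕ) : ℚ[X] :=
  ∑ l ∈ range m,
    C ((m.factorial : ℚ) * (m - 1).choose l * (m + 1).choose (l + 1)) * X ^ (2 * l + (m + 1))

theorem phiTilde_eq (m : ℕ) :
    phiTilde m = algebraMap ℚ[X] (RatFunc ℚ) (phiNum m) /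
      algebraMap ℚ[X] (RatFunc ℚ) ((X ^ 2 - 1) ^ 2) ^ m := by
  simp only [phiTilde, phiNum, map_sum, map_mul, map_pow, map_sub, map_one, RatFunc.algebraMap_X,
    RatFunc.algebraMap_C, sum_div, mul_sum]
  refine sum_congr rfl fun l _ => ?_
  rw [show (2 * l : ℤ) = ((2 * l : ℕ) : ℤ) by push_cast; ring, mul_div_assoc,
    ← zpow_sub_div_sub_inv_pow RatFunc.X_ne_zero]
  simp only [map_natCast]
  ring

theorem psiTilde_eq (m : ℕ) :
    psiTilde m = algebraMap ℚ[X] (RatFunc ℚ) (psiNum m) /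
      algebraMap ℚ[X] (RatFunc ℚ) ((X ^ 2 - 1) ^ 2) ^ m := by
  simp only [psiTilde, psiNum, map_sum, map_mul, map_pow, map_sub, map_one, RatFunc.algebraMap_X,
    RatFunc.algebraMap_C, sum_div, mul_sum]
  refine sum_congr rfl fun l _ => ?_
  rw [show (2 * l : ℤ) + 1 = ((2 * l + 1 : ℕ) : ℤ) by push_cast; ring,
    show 2 * l + (m + 1) = 2 * l + 1 + m by ring, mul_div_assoc,
    ← zpow_sub_div_sub_inv_pow RatFunc.X_ne_zero]
  simp only [map_natCast]
  ring

theorem phiNum_eval_neg (m : ℕ) (t : ℚ) : (phiNum m).eval (-t) = (-1) ^ m * (phiNum m).eval t :=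
  eval_neg_sum_C_mul_X_pow _ _ _ _

theorem psiNum_eval_neg (m : ℕ) (t : ℚ) :
    (psiNum m).eval (-t) = (-1) ^ (m + 1) * (psiNum m).eval t :=
  eval_neg_sum_C_mul_X_pow _ _ _ _

theorem phiNum_eval_one_pos (m : ℕ) : 0 < (phiNum m).eval 1 := by
  simp only [phiNum, eval_finsetSum, eval_mul, eval_C, eval_pow, eval_X, one_pow, mul_one]
  exact sum_pos' (fun _ _ => by positivity) ⟨0, by simp, by simp; positivity⟩

theorem psiNum_eval_one_pos {m : ℕ} (hm : 0 < m) : 0 < (psiNum m).eval 1 := by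
  simp only [psiNum, eval_finsetSum, eval_mul, eval_C, eval_pow, eval_X, one_pow, mul_one]
  exact sum_pos' (fun _ _ => by positivity) ⟨0, by simpa using hm, by simp; positivity⟩

theorem ratCast_mul_phiTilde_add_ratCast_mul_psiTilde (a b : ℚ) (m : ℕ) :
    (a : RatFunc ℚ) * phiTilde m + (b : RatFunc ℚ) * psiTilde m =
      algebraMap ℚ[X] (RatFunc ℚ) (C a * phiNum m + C b * psiNum m) /
        algebraMap ℚ[X] (RatFunc ℚ) ((X ^ 2 - 1) ^ 2) ^ m := by
  rw [phiTilde_eq, psiTilde_eq, map_add, map_mul, map_mul, add_div, mul_div_assoc, mul_div_assoc,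
    RatFunc.algebraMap_C, RatFunc.algebraMap_C, eq_ratCast RatFunc.C, eq_ratCast RatFunc.C]

theorem last_coeffs_eq_zero_of_sum_eq_zero {K : ℕ} (a b : Fin (K + 1) → ℚ)
    (h : ∑ i, ((a i : RatFunc ℚ) * phiTilde (i + 1) + (b i : RatFunc ℚ) * psiTilde (i + 1)) = 0) :
    a (Fin.last K) = 0 ∧ b (Fin.last K) = 0 := by
  simp only [ratCast_mul_phiTilde_add_ratCast_mul_psiTilde] at h
  have hd : ((X ^ 2 - 1) ^ 2 : ℚ[X]) ≠ 0 := pow_ne_zero _ (X_pow_sub_C_ne_zero two_pos 1)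
  have at_one := eval_last_eq_zero_of_sum_div_pow_eq_zero _ hd h (t := 1) (by simp)
  have at_neg_one := eval_last_eq_zero_of_sum_div_pow_eq_zero _ hd h (t := -1) (by simp)
  simp only [eval_add, eval_mul, eval_C, phiNum_eval_neg, psiNum_eval_neg, Fin.val_last]
    at at_one at_neg_one
  have hp := phiNum_eval_one_pos (K + 1)
  have hq := psiNum_eval_one_pos K.succ_pos
  have hsign : (-1 : ℚ) ^ (K + 1) ≠ 0 := pow_ne_zero _ (by norm_num)
  have hdiff :
      a (Fin.last K) * (phiNum (K + 1)).eval 1 - b (Fin.last K) * (psiNum (K + 1)).eval 1 = 0 := by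
    refine (mul_eq_zero.1 ?_).resolve_left hsign
    linear_combination at_neg_one
  have hpa : a (Fin.last K) * (phiNum (K + 1)).eval 1 = 0 := by linarith
  have hqb : b (Fin.last K) * (psiNum (K + 1)).eval 1 = 0 := by linarith
  exact ⟨(mul_eq_zero.1 hpa).resolve_right hp.ne', (mul_eq_zero.1 hqb).resolve_right hq.ne'⟩

theorem coeffs_eq_zero_of_sum_eq_zero :
    ∀ {K : ℕ} (a b : Fin K → ℚ),
      ∑ i, ((a i : RatFunc ℚ) * phiTilde (i + 1) + (b i : RatFunc ℚ) * psiTilde (i + 1)) = 0 →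
        a = 0 ∧ b = 0
  | 0, _, _, _ => ⟨Subsingleton.elim _ _, Subsingleton.elim _ _⟩
  | K + 1, a, b, h => by
    obtain ⟨ha, hb⟩ := last_coeffs_eq_zero_of_sum_eq_zero a b h
    rw [Fin.sum_univ_castSucc, ha, hb, Rat.cast_zero, zero_mul, zero_mul, add_zero, add_zero] at h
    obtain ⟨ha', hb'⟩ := coeffs_eq_zero_of_sum_eq_zero (a ∘ Fin.castSucc) (b ∘ Fin.castSucc) h
    exact ⟨funext (Fin.lastCases ha (congrFun ha')), funext (Fin.lastCases hb (congrFun hb'))⟩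

theorem stmt8_general (k : ℕ) :
    LinearIndependent ℚ
      (Sum.elim (fun i : Fin k => phiTilde ((i : ℕ) + 1))
        (fun i : Fin k => psiTilde ((i : ℕ) + 1))) := by
  refine Fintype.linearIndependent_iff.2 fun g hg => ?_
  -- the `ℚ`-action here is that of `DivisionRing.toRatAlgebra`, not `RatFunc`'s own `SMul`
  simp only [Rat.smul_def, Fintype.sum_sum_type, Sum.elim_inl, Sum.elim_inr, ← sum_add_distrib]
    at hg
  obtain ⟨hinl, hinr⟩ := coeffs_eq_zero_of_sum_eq_zero (g ∘ Sum.inl) (g ∘ Sum.inr) hg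
  rintro (i | i)
  exacts [congrFun hinl i, congrFun hinr i]

/-- For every integer `k ≥ 1`, the family of `2k` rational
functions `{φ̃_1, …, φ̃_k, ψ̃_1, …, ψ̃_k}` is linearly independent over `ℚ`. -/
theorem stmt8 (k : ℕ) (hk : 1 ≤ k) :
    LinearIndependent ℚ
      (Sum.elim (fun i : Fin k => phiTilde ((i : ℕ) + 1))
        (fun i : Fin k => psiTilde ((i : ℕ) + 1))) :=
  stmt8_general k
end

section
/- Let R be a commutative ring, let u, z ∈ R, and let Y = z·T⁻¹ + u + T be the Laurent polynomial over R. Then for all integers j ≥ 0 and p ≥ 0, the coefficient of T^{−p} in Y^j equals z^p times the coefficient of T^{p} in Y^j. -/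
/-! Write `Y = z T⁻¹ + u + T`. Multiplying by `Y` acts on coefficients by
`(Y f)ₖ = z fₖ₊₁ + u fₖ + fₖ₋₁`, and this recurrence preserves the relation
`f₋ₚ = zᵖ fₚ` (for `p ≥ 0`); it holds for `f = 1`, hence for every power of `Y`. -/

open LaurentPolynomial

namespace LaurentPolynomial

lemma coeff_C_mul_T_mul {R : Type*} [Semiring R] (a : R) (n k : ℤ) (f : R[T;T⁻¹]) :
    (C a * T n * f).coeff k = a * f.coeff (k - n) := by
  rw [← single_eq_C_mul_T, AddMonoidAlgebra.coeff_single_mul_apply, neg_add_eq_sub]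

variable {R : Type*} [CommRing R]

lemma coeff_mul_eq_recurrence (u z : R) (f : R[T;T⁻¹]) (k : ℤ) :
    ((C z * T (-1) + C u + T 1) * f).coeff k =
      z * f.coeff (k + 1) + u * f.coeff k + f.coeff (k - 1) := by
  have hu : (C u : R[T;T⁻¹]) = C u * T 0 := by rw [T_zero, mul_one]
  have hT : (T 1 : R[T;T⁻¹]) = C 1 * T 1 := by rw [map_one, one_mul]
  rw [hu, hT, add_mul, add_mul, AddMonoidAlgebra.coeff_add, AddMonoidAlgebra.coeff_add,
    Finsupp.add_apply, Finsupp.add_apply,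
    coeff_C_mul_T_mul, coeff_C_mul_T_mul, coeff_C_mul_T_mul,
    sub_neg_eq_add, sub_zero, one_mul]

lemma coeff_neg_eq_pow_mul_coeff_mul {u z : R} {f : R[T;T⁻¹]}
    (hf : ∀ p : ℕ, f.coeff (-p) = z ^ p * f.coeff p) (p : ℕ) :
    ((C z * T (-1) + C u + T 1) * f).coeff (-p) =
      z ^ p * ((C z * T (-1) + C u + T 1) * f).coeff p := by
  simp only [coeff_mul_eq_recurrence]
  rcases p with _ | q
  · simp
  · have hq : (-((q + 1 : ℕ) : ℤ)) + 1 = -q := by push_cast; ring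
    have hq2 : (-((q + 1 : ℕ) : ℤ)) - 1 = -((q + 2 : ℕ) : ℤ) := by push_cast; ring
    rw [hq, hq2, hf, hf, hf]
    push_cast
    ring_nf

end LaurentPolynomial

/-- Let `R` be a commutative ring, `u z ∈ R`, and
`Y = z·T⁻¹ + u + T` the Laurent polynomial over `R`.  Then for all `j, p ≥ 0`,
the coefficient of `T^(-p)` in `Y^j` equals `z^p` times the coefficient of
`T^p` in `Y^j`. -/
theorem stmt10 (R : Type*) [CommRing R] (u z : R) (j p : ℕ) :
    ((C z * T (-1) + C u + T 1 : R[T;T⁻¹]) ^ j).coeff (-(p : ℤ)) =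
      z ^ p * ((C z * T (-1) + C u + T 1 : R[T;T⁻¹]) ^ j).coeff (p : ℤ) := by
  induction j generalizing p with
  | zero =>
    rcases p with _ | q
    · simp
    · simp only [pow_zero, ← T_zero, T_apply]
      rw [if_neg (by omega), if_neg (by omega), mul_zero]
  | succ j ih => rw [pow_succ']; exact coeff_neg_eq_pow_mul_coeff_mul ih p
end

section
/- Let W be a polynomial with real coefficients, let I ⊆ ℝ be an open interval, and let u, z : ℝ → ℝ be infinitely differentiable on I. For x ∈ I let Y(x) = T + u(x) + z(x)·T⁻¹, a Laurent polynomial over ℝ, and write [T⁰]F for the coefficient of T⁰ in a Laurent polynomial F. Assume: (i) for all x ∈ I, [T⁰] W'(Y(x)) = 0 and [T⁰]( T · W'(Y(x)) ) = x; (ii) z'(x)² − z(x)·u'(x)² ≠ 0 for all x ∈ I. Define functions φ_m, ψ_m on I recursively by φ_0 = 0, ψ_0(x) = x, and (φ_{m+1}, ψ_{m+1}) = (1/(z'² − z·u'²)) · ( −z·u'·φ_m' + z'·ψ_m' , z·z'·φ_m' − z·u'·ψ_m' ). Then for every integer m ≥ 0 and every x ∈ I: φ_m(x) = [T⁰] W^{(m+1)}(Y(x))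 and ψ_m(x) = [T⁰]( T · W^{(m+1)}(Y(x)) ), where W^{(m+1)} denotes the (m+1)-st derivative of the polynomial W. -/
open LaurentPolynomial Polynomial


lemma stmt11_coeff_mul_Y (p q : ℝ) (A : ℝ[T;T⁻¹]) (n : ℤ) :
    ((A * (T 1 + LaurentPolynomial.C p + LaurentPolynomial.C q * T (-1)) : ℝ[T;T⁻¹])).coeff n
      = A.coeff (n - 1) + A.coeff n * p + A.coeff (n + 1) * q := by
  have e1 : (T 1 : ℝ[T;T⁻¹]) = AddMonoidAlgebra.single (1 : ℤ) (1 : ℝ) := rfl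
  have e2 : (LaurentPolynomial.C p : ℝ[T;T⁻¹]) = AddMonoidAlgebra.single (0 : ℤ) p := by
    rw [single_eq_C_mul_T, T_zero, mul_one]
  have e3 : (LaurentPolynomial.C q * T (-1) : ℝ[T;T⁻¹]) = AddMonoidAlgebra.single (-1 : ℤ) q :=
    (single_eq_C_mul_T q (-1)).symm
  rw [mul_add, mul_add, e1, e2, e3, AddMonoidAlgebra.coeff_add, AddMonoidAlgebra.coeff_add,
    Finsupp.add_apply, Finsupp.add_apply,
    AddMonoidAlgebra.coeff_mul_single_apply, AddMonoidAlgebra.coeff_mul_single_apply,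
    AddMonoidAlgebra.coeff_mul_single_apply]
  norm_num
  rw [← sub_eq_add_neg]


lemma stmt11_add_apply (A B : ℝ[T;T⁻¹]) (n : ℤ) : ((A + B : ℝ[T;T⁻¹])).coeff n = A.coeff n + B.coeff n := rfl

lemma stmt11_key (u z : ℝ → ℝ) (x du dz : ℝ) (hu : HasDerivAt u du x)
    (hz : HasDerivAt z dz x) (P : ℝ[X]) : ∀ n : ℤ,
    HasDerivAt (fun t => ((aeval (T 1 + LaurentPolynomial.C (u t) +
        LaurentPolynomial.C (z t) * T (-1) : ℝ[T;T⁻¹]) P : ℝ[T;T⁻¹])).coeff n)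
      (du * ((aeval (T 1 + LaurentPolynomial.C (u x) +
          LaurentPolynomial.C (z x) * T (-1) : ℝ[T;T⁻¹]) (derivative P) : ℝ[T;T⁻¹])).coeff n
        + dz * ((aeval (T 1 + LaurentPolynomial.C (u x) +
          LaurentPolynomial.C (z x) * T (-1) : ℝ[T;T⁻¹]) (derivative P) : ℝ[T;T⁻¹])).coeff (n + 1)) x := by
  induction P using Polynomial.induction_on with
  | C a =>
    intro n
    simp only [aeval_C, derivative_C, map_zero, AddMonoidAlgebra.coeff_zero, Finsupp.coe_zero, Pi.zero_apply, mul_zero,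
      add_zero]
    exact hasDerivAt_const x _
  | add p q hp hq =>
    intro n
    simp only [map_add, stmt11_add_apply, derivative_add]
    refine ((hp n).add (hq n)).congr_deriv ?_
    ring
  | monomial k a ih =>
    intro n
    have hQX : (Polynomial.C a * X ^ (k + 1) : ℝ[X]) = (Polynomial.C a * X ^ k) * X := by ring
    rw [hQX]
    have hfun : (fun t => ((aeval (T 1 + LaurentPolynomial.C (u t) +
          LaurentPolynomial.C (z t) * T (-1) : ℝ[T;T⁻¹]) ((Polynomial.C a * X ^ k) * X) : ℝ[T;T⁻¹])).coeff n)
        = fun t => ((aeval (T 1 + LaurentPolynomial.C (u t) +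
            LaurentPolynomial.C (z t) * T (-1) : ℝ[T;T⁻¹]) (Polynomial.C a * X ^ k) : ℝ[T;T⁻¹])).coeff (n - 1)
          + ((aeval (T 1 + LaurentPolynomial.C (u t) +
            LaurentPolynomial.C (z t) * T (-1) : ℝ[T;T⁻¹]) (Polynomial.C a * X ^ k) : ℝ[T;T⁻¹])).coeff n * u t
          + ((aeval (T 1 + LaurentPolynomial.C (u t) +
            LaurentPolynomial.C (z t) * T (-1) : ℝ[T;T⁻¹]) (Polynomial.C a * X ^ k) : ℝ[T;T⁻¹])).coeff (n + 1) * z t := by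
      funext t
      rw [map_mul, aeval_X, stmt11_coeff_mul_Y]
    rw [hfun]
    have h := ((ih (n - 1)).add ((ih n).mul hu)).add ((ih (n + 1)).mul hz)
    refine h.congr_deriv ?_
    have e : derivative ((Polynomial.C a * X ^ k : ℝ[X]) * X)
        = derivative (Polynomial.C a * X ^ k) * X + (Polynomial.C a * X ^ k) := by
      rw [derivative_mul, derivative_X, mul_one]
    rw [e, map_add (aeval _), map_mul (aeval _) (derivative (Polynomial.C a * X ^ k)) X, aeval_X, stmt11_add_apply, stmt11_add_apply,
      stmt11_coeff_mul_Y, stmt11_coeff_mul_Y,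
      show n - 1 + 1 = n by ring, show n + 1 - 1 = n by ring]
    ring

lemma stmt11_T_one_mul_apply (A : ℝ[T;T⁻¹]) : ((T 1 * A : ℝ[T;T⁻¹])).coeff (0 : ℤ) = A.coeff (-1) := by
  rw [show (T 1 : ℝ[T;T⁻¹]) = AddMonoidAlgebra.single (1 : ℤ) (1 : ℝ) from rfl,
    AddMonoidAlgebra.coeff_single_mul_apply]
  norm_num

lemma stmt11_sym (p q : ℝ) (P : ℝ[X]) : ∀ n : ℕ,
    ((aeval (T 1 + LaurentPolynomial.C p + LaurentPolynomial.C q * T (-1) : ℝ[T;T⁻¹]) P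
      : ℝ[T;T⁻¹])).coeff (-(n : ℤ))
    = q ^ n * ((aeval (T 1 + LaurentPolynomial.C p + LaurentPolynomial.C q * T (-1) : ℝ[T;T⁻¹]) P
      : ℝ[T;T⁻¹])).coeff (n : ℤ) := by
  induction P using Polynomial.induction_on with
  | C a =>
    intro n
    rw [aeval_C, ← LaurentPolynomial.C_eq_algebraMap, LaurentPolynomial.C_apply,
      LaurentPolynomial.C_apply]
    rcases n with _ | k
    · norm_num
    · have h1 : ¬(-(((k:ℕ)+1 : ℕ) : ℤ) = 0) := by omega
      have h2 : ¬((((k:ℕ)+1 : ℕ) : ℤ) = 0) := by omega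
      rw [if_neg h1, if_neg h2, mul_zero]
  | add f g hf hg =>
    intro n
    simp only [map_add]
    rw [show ∀ (A B : ℝ[T;T⁻¹]) (m : ℤ), ((A + B : ℝ[T;T⁻¹])).coeff m = A.coeff m + B.coeff m from fun _ _ _ => rfl,
      show ∀ (A B : ℝ[T;T⁻¹]) (m : ℤ), ((A + B : ℝ[T;T⁻¹])).coeff m = A.coeff m + B.coeff m from fun _ _ _ => rfl,
      hf n, hg n, mul_add]
  | monomial k a ih =>
    intro n
    have hQX : (Polynomial.C a * X ^ (k + 1) : ℝ[X]) = (Polynomial.C a * X ^ k) * X := by ring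
    rw [hQX, map_mul, aeval_X, stmt11_coeff_mul_Y, stmt11_coeff_mul_Y]
    rcases n with _ | m
    · norm_num
    · have e1 : -(((m + 1 : ℕ)) : ℤ) - 1 = -(((m + 2 : ℕ)) : ℤ) := by push_cast; ring
      have e2 : -(((m + 1 : ℕ)) : ℤ) + 1 = -(((m : ℕ)) : ℤ) := by push_cast; ring
      have e3 : (((m + 1 : ℕ)) : ℤ) - 1 = (((m : ℕ)) : ℤ) := by push_cast; ring
      have e4 : (((m + 1 : ℕ)) : ℤ) + 1 = (((m + 2 : ℕ)) : ℤ) := by push_cast; ring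
      rw [e1, e2, e3, e4, ih (m + 2), ih (m + 1), ih m]
      ring

/-- Let `W` be a real polynomial, `I = (a,b)` an open interval,
and `u z : ℝ → ℝ` smooth on `I`.  For `x ∈ I` let `Y x = T + u(x) + z(x)·T⁻¹`
(a Laurent polynomial over `ℝ`), and assume `[T⁰] W'(Y x) = 0`,
`[T⁰](T·W'(Y x)) = x` on `I`, and `z'(x)² - z(x)·u'(x)² ≠ 0` on `I`.
If `φ_m, ψ_m` satisfy the recursion `φ_0 = 0`, `ψ_0(x) = x`,
`(φ_{m+1}, ψ_{m+1}) = (1/(z'²-z·u'²))·(-z·u'·φ_m' + z'·ψ_m', z·z'·φ_m' - z·u'·ψ_m')`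
on `I`, then for all `m ≥ 0` and `x ∈ I`:
`φ_m(x) = [T⁰] W^{(m+1)}(Y x)` and `ψ_m(x) = [T⁰](T·W^{(m+1)}(Y x))`. -/
theorem stmt11 (W : Polynomial ℝ) (a b : ℝ) (u z : ℝ → ℝ)
    (hu : ContDiffOn ℝ (⊤ : ℕ∞) u (Set.Ioo a b)) (hz : ContDiffOn ℝ (⊤ : ℕ∞) z (Set.Ioo a b))
    (Y : ℝ → LaurentPolynomial ℝ)
    (hY : ∀ x, Y x = T 1 + LaurentPolynomial.C (u x) + LaurentPolynomial.C (z x) * T (-1))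
    (h1 : ∀ x ∈ Set.Ioo a b, (aeval (Y x) (derivative W)).coeff (0 : ℤ) = 0)
    (h2 : ∀ x ∈ Set.Ioo a b, ((T 1 * aeval (Y x) (derivative W) : ℝ[T;T⁻¹])).coeff (0 : ℤ) = x)
    (hnz : ∀ x ∈ Set.Ioo a b, (deriv z x) ^ 2 - z x * (deriv u x) ^ 2 ≠ 0)
    (φ ψ : ℕ → ℝ → ℝ)
    (hφ0 : ∀ x ∈ Set.Ioo a b, φ 0 x = 0)
    (hψ0 : ∀ x ∈ Set.Ioo a b, ψ 0 x = x)
    (hφrec : ∀ m : ℕ, ∀ x ∈ Set.Ioo a b, φ (m + 1) x =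
      (1 / ((deriv z x) ^ 2 - z x * (deriv u x) ^ 2)) *
        (-(z x * deriv u x) * deriv (φ m) x + deriv z x * deriv (ψ m) x))
    (hψrec : ∀ m : ℕ, ∀ x ∈ Set.Ioo a b, ψ (m + 1) x =
      (1 / ((deriv z x) ^ 2 - z x * (deriv u x) ^ 2)) *
        (z x * deriv z x * deriv (φ m) x - z x * deriv u x * deriv (ψ m) x)) :
    ∀ m : ℕ, ∀ x ∈ Set.Ioo a b,
      φ m x = (aeval (Y x) ((⇑derivative)^[m + 1] W)).coeff (0 : ℤ) ∧
      ψ m x = ((T 1 * aeval (Y x) ((⇑derivative)^[m + 1] W) : ℝ[T;T⁻¹])).coeff (0 : ℤ) := by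
  have hIopen : IsOpen (Set.Ioo a b) := isOpen_Ioo
  intro m
  induction m with
  | zero =>
    intro x hx
    rw [show ((⇑derivative)^[0 + 1] W) = derivative W from Function.iterate_one _ ▸ rfl]
    exact ⟨by rw [hφ0 x hx, h1 x hx], by rw [hψ0 x hx, h2 x hx]⟩
  | succ m ih =>
    intro x hx
    -- derivatives of u and z at x
    have hud : HasDerivAt u (deriv u x) x :=
      (((hu.differentiableOn (by simp)) x hx).differentiableAt
        (hIopen.mem_nhds hx)).hasDerivAt
    have hzd : HasDerivAt z (deriv z x) x :=
      (((hz.differentiableOn (by simp)) x hx).differentiableAt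
        (hIopen.mem_nhds hx)).hasDerivAt
    set G : ℝ[X] := (⇑derivative)^[m + 1] W with hG
    have hiter : (⇑derivative)^[m + 1 + 1] W = derivative G := by
      rw [hG]; exact Function.iterate_succ_apply' _ _ _
    set A' : ℤ → ℝ := fun j => ((aeval (Y x) (derivative G) : ℝ[T;T⁻¹])).coeff j with hA'
    -- the coefficient functions
    set f : ℝ → ℝ := fun t => ((aeval (Y t) G : ℝ[T;T⁻¹])).coeff (0 : ℤ) with hf
    set g : ℝ → ℝ := fun t => ((aeval (Y t) G : ℝ[T;T⁻¹])).coeff (-1 : ℤ) with hg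
    have hdf : HasDerivAt f ((deriv u x) * A' 0 + (deriv z x) * A' 1) x := by
      have := stmt11_key u z x (deriv u x) (deriv z x) hud hzd G 0
      simp only [← hY] at this
      simpa using this
    have hdg : HasDerivAt g ((deriv u x) * A' (-1) + (deriv z x) * A' 0) x := by
      have := stmt11_key u z x (deriv u x) (deriv z x) hud hzd G (-1)
      simp only [← hY] at this
      simpa using this
    -- identify deriv (φ m) and deriv (ψ m) at x
    have hφf : φ m =ᶠ[nhds x] f :=
      Filter.eventuallyEq_of_mem (hIopen.mem_nhds hx) (fun t ht => (ih t ht).1)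
    have hψg : ψ m =ᶠ[nhds x] g := by
      refine Filter.eventuallyEq_of_mem (hIopen.mem_nhds hx) (fun t ht => ?_)
      rw [(ih t ht).2, stmt11_T_one_mul_apply]
    have hdφ : deriv (φ m) x = (deriv u x) * A' 0 + (deriv z x) * A' 1 := by
      rw [hφf.deriv_eq, hdf.deriv]
    have hdψ : deriv (ψ m) x = (deriv u x) * A' (-1) + (deriv z x) * A' 0 := by
      rw [hψg.deriv_eq, hdg.deriv]
    -- symmetry
    have hsym : A' (-1) = z x * A' 1 := by
      have := stmt11_sym (u x) (z x) (derivative G) 1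
      simp only [← hY] at this
      simpa [hA'] using this
    have hD := hnz x hx
    constructor
    · rw [hφrec m x hx, hdφ, hdψ, hiter, hsym]
      show _ = A' 0
      field_simp
      ring
    · rw [hψrec m x hx, hdφ, hdψ, hiter, stmt11_T_one_mul_apply, hsym]
      show _ = A' (-1)
      rw [hsym]
      field_simp
      ring
end

section
/- Let α₋ < α₊ be real numbers, set √z = (α₊ − α₋)/4 and z = ((α₊ − α₋)/4)², and define R(s) = √((s − α₋)(s − α₊)) for s ≥ α₊. Then for every real y > α₊, the improper integral ∫_y^∞ ds/((s − α₋)²·R(s)) converges and equals (1/(12z))·( 1 − (y − α₊)/R(y) − 2√z·(y − α₊)/((y − α₋)·R(y)) ). -/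
open MeasureTheory Filter Topology

/-!
Substitute `t = √((s - α₊)/(s - α₋))`, which increases from `t(y) ∈ (0, 1)` to `1` as `s → ∞`.
Then `R(s) = (s - α₋) t`, `α₊ - α₋ = (s - α₋)(1 - t²)` and
`dt/ds = (α₊ - α₋) / (2 (s - α₋)² t)`, so with `d = α₊ - α₋ = 4√z` the integrand becomes
`(2/d²)(1 - t²) dt`. Hence `-(2/(3d²))(1 - t)²(2 + t)` is a primitive vanishing at infinity, and
the integral is `(2/(3d²))(1 - t(y))²(2 + t(y))`, which is the stated closed form rewritten in
terms of `R(y)`.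
-/

theorem sqrt_mul_eq_mul_sqrt_div {x : ℝ} (hx : 0 < x) (y : ℝ) : √(x * y) = x * √(y / x) := by
  rw [← Real.sqrt_sq hx.le, ← Real.sqrt_mul (sq_nonneg x), Real.sqrt_sq hx.le]
  congr 1
  field_simp

noncomputable def sqrtRatio (a b s : ℝ) : ℝ := √((s - b) / (s - a))

noncomputable def sqrtRatioPrimitive (a b s : ℝ) : ℝ :=
  -(2 / (3 * (b - a) ^ 2)) * ((1 - sqrtRatio a b s) ^ 2 * (2 + sqrtRatio a b s))

section

variable {a b s : ℝ}

theorem sqrtRatio_pos (has : a < s) (hbs : b < s) : 0 < sqrtRatio a b s :=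
  Real.sqrt_pos.mpr (div_pos (sub_pos.mpr hbs) (sub_pos.mpr has))

theorem sub_eq_mul_sqrtRatio_sq (has : a < s) (hbs : b ≤ s) :
    s - b = (s - a) * sqrtRatio a b s ^ 2 := by
  rw [sqrtRatio, Real.sq_sqrt (div_nonneg (sub_nonneg.mpr hbs) (sub_pos.mpr has).le),
    mul_div_cancel₀ _ (sub_pos.mpr has).ne']

theorem sub_eq_mul_one_sub_sqrtRatio_sq (has : a < s) (hbs : b ≤ s) :
    b - a = (s - a) * (1 - sqrtRatio a b s ^ 2) := by
  linear_combination -sub_eq_mul_sqrtRatio_sq has hbs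

theorem one_sub_sqrtRatio_sq_pos (hab : a < b) (hbs : b ≤ s) : 0 < 1 - sqrtRatio a b s ^ 2 := by
  have has := hab.trans_le hbs
  refine pos_of_mul_pos_right ?_ (sub_pos.mpr has).le
  rw [← sub_eq_mul_one_sub_sqrtRatio_sq has hbs]
  exact sub_pos.mpr hab

theorem sqrt_mul_sub_eq_mul_sqrtRatio (has : a < s) :
    √((s - a) * (s - b)) = (s - a) * sqrtRatio a b s :=
  sqrt_mul_eq_mul_sqrt_div (sub_pos.mpr has) _

theorem hasDerivAt_sqrtRatio (has : a < s) (hbs : b < s) :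
    HasDerivAt (sqrtRatio a b) ((b - a) / (2 * (s - a) ^ 2 * sqrtRatio a b s)) s := by
  have hq : HasDerivAt (fun s => (s - b) / (s - a)) ((b - a) / (s - a) ^ 2) s :=
    (((hasDerivAt_id' s).sub_const b).div ((hasDerivAt_id' s).sub_const a)
      (sub_pos.mpr has).ne').congr_deriv (by ring)
  exact (hq.sqrt (div_pos (sub_pos.mpr hbs) (sub_pos.mpr has)).ne').congr_deriv
    (by rw [sqrtRatio, div_div, mul_left_comm, mul_assoc])

theorem tendsto_sqrtRatio_atTop : Tendsto (sqrtRatio a b) atTop (𝓝 1) := by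
  unfold sqrtRatio
  have hq : Tendsto (fun s => (s - b) / (s - a)) atTop (𝓝 1) := by
    have hinv : Tendsto (fun s : ℝ => (s - a)⁻¹) atTop (𝓝 0) :=
      (tendsto_atTop_add_const_right _ (-a) tendsto_id).inv_tendsto_atTop
    have := (hinv.const_mul (a - b)).const_add 1
    rw [mul_zero, add_zero] at this
    refine this.congr' ?_
    filter_upwards [eventually_gt_atTop a] with s hs
    field_simp [(sub_pos.mpr hs).ne']
    ring
  have := (Real.continuous_sqrt.tendsto 1).comp hq
  rwa [Real.sqrt_one] at this

theorem hasDerivAt_sqrtRatioPrimitive (hab : a < b) (hbs : b < s) :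
    HasDerivAt (sqrtRatioPrimitive a b) (1 / ((s - a) ^ 2 * √((s - a) * (s - b)))) s := by
  have has := hab.trans hbs
  have ht := hasDerivAt_sqrtRatio has hbs
  have hF := (((ht.const_sub 1).pow 2).mul (ht.const_add 2)).const_mul (-(2 / (3 * (b - a) ^ 2)))
  refine hF.congr_deriv ?_
  simp only [Pi.pow_apply]
  rw [sqrt_mul_sub_eq_mul_sqrtRatio has]
  have ht0 := sqrtRatio_pos has hbs
  have ht1 := one_sub_sqrtRatio_sq_pos hab hbs.le
  have hsa : 0 < s - a := sub_pos.mpr has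
  rw [sub_eq_mul_one_sub_sqrtRatio_sq has hbs.le]
  field_simp
  ring

theorem tendsto_sqrtRatioPrimitive_atTop : Tendsto (sqrtRatioPrimitive a b) atTop (𝓝 0) := by
  have ht := tendsto_sqrtRatio_atTop (a := a) (b := b)
  have := ((ht.const_sub 1).pow 2).mul (ht.const_add 2) |>.const_mul (-(2 / (3 * (b - a) ^ 2)))
  unfold sqrtRatioPrimitive
  simpa using this

theorem neg_sqrtRatioPrimitive_eq (hab : a < b) (hbs : b < s) :
    -sqrtRatioPrimitive a b s =
      1 / (12 * ((b - a) / 4) ^ 2) *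
        (1 - (s - b) / √((s - a) * (s - b)) -
          2 * ((b - a) / 4) * (s - b) / ((s - a) * √((s - a) * (s - b)))) := by
  have has := hab.trans hbs
  rw [sqrt_mul_sub_eq_mul_sqrtRatio has, sqrtRatioPrimitive]
  have ht0 := sqrtRatio_pos has hbs
  have ht1 := one_sub_sqrtRatio_sq_pos hab hbs.le
  have hsa : 0 < s - a := sub_pos.mpr has
  rw [sub_eq_mul_one_sub_sqrtRatio_sq has hbs.le, sub_eq_mul_sqrtRatio_sq has hbs.le]
  field_simp
  ring

end

/-- Let `α₋ < α₊`, `√z = (α₊ - α₋)/4`, `z = ((α₊ - α₋)/4)²`,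
and `R(s) = √((s - α₋)(s - α₊))`.  Then for every `y > α₊` the improper
integral `∫_y^∞ ds/((s - α₋)²·R(s))` converges and equals
`(1/(12z))·(1 - (y - α₊)/R(y) - 2√z·(y - α₊)/((y - α₋)·R(y)))`. -/
theorem stmt13 (αm αp : ℝ) (hα : αm < αp) (y : ℝ) (hy : αp < y) :
    IntegrableOn (fun s => 1 / ((s - αm) ^ 2 * Real.sqrt ((s - αm) * (s - αp))))
        (Set.Ioi y) volume ∧
      ∫ s in Set.Ioi y, 1 / ((s - αm) ^ 2 * Real.sqrt ((s - αm) * (s - αp))) =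
        1 / (12 * ((αp - αm) / 4) ^ 2) *
          (1 - (y - αp) / Real.sqrt ((y - αm) * (y - αp)) -
            2 * ((αp - αm) / 4) * (y - αp) /
              ((y - αm) * Real.sqrt ((y - αm) * (y - αp)))) := by
  have hderiv : ∀ s ∈ Set.Ici y, HasDerivAt (sqrtRatioPrimitive αm αp)
      (1 / ((s - αm) ^ 2 * √((s - αm) * (s - αp)))) s :=
    fun s hs => hasDerivAt_sqrtRatioPrimitive hα (hy.trans_le hs)
  have hnonneg : ∀ s ∈ Set.Ioi y, 0 ≤ 1 / ((s - αm) ^ 2 * √((s - αm) * (s - αp))) :=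
    fun _ _ => by positivity
  have hlim := tendsto_sqrtRatioPrimitive_atTop (a := αm) (b := αp)
  refine ⟨integrableOn_Ioi_deriv_of_nonneg' hderiv hnonneg hlim, ?_⟩
  rw [integral_Ioi_of_hasDerivAt_of_nonneg' hderiv hnonneg hlim, zero_sub,
    neg_sqrtRatioPrimitive_eq hα hy]
end

section
/- Let j, x, t, u, z, u_t, z_t, u_x, z_x be real numbers with j ≠ 2, and suppose the following four relations hold: (a) u + j·t·u_t = 2(u_x·z + u·z_x); (b) 2z + j·t·z_t = 2z·u·u_x + 2z·z_x; (c) (j−2)·t·z_t + 2z = 2x·z_x; (d) (j−2)·t·u_t + u = 2x·u_x. If D := (jx − (j−2)z)² − (j−2)²·u²·z ≠ 0, then z_x = (2z(jx − (j−2)z) + (j−2)u²z)/D and u_x = (jxu + (j−2)uz)/D. -/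
/-- Pointwise algebraic elimination of the `t`-derivatives
from the Toda-type equations using the scaling relations: if `j ≠ 2`,
(a) `u + j·t·u_t = 2(u_x·z + u·z_x)`, (b) `2z + j·t·z_t = 2z·u·u_x + 2z·z_x`,
(c) `(j-2)·t·z_t + 2z = 2x·z_x`, (d) `(j-2)·t·u_t + u = 2x·u_x`, and
`D = (jx - (j-2)z)² - (j-2)²·u²·z ≠ 0`, then
`z_x = (2z(jx - (j-2)z) + (j-2)u²z)/D` and `u_x = (jxu + (j-2)uz)/D`. -/
theorem stmt15 (j x t u z ut zt ux zx : ℝ) (hj : j ≠ 2)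
    (ha : u + j * t * ut = 2 * (ux * z + u * zx))
    (hb : 2 * z + j * t * zt = 2 * z * u * ux + 2 * z * zx)
    (hc : (j - 2) * t * zt + 2 * z = 2 * x * zx)
    (hd : (j - 2) * t * ut + u = 2 * x * ux)
    (hD : (j * x - (j - 2) * z) ^ 2 - (j - 2) ^ 2 * u ^ 2 * z ≠ 0) :
    zx = (2 * z * (j * x - (j - 2) * z) + (j - 2) * u ^ 2 * z) /
        ((j * x - (j - 2) * z) ^ 2 - (j - 2) ^ 2 * u ^ 2 * z) ∧
      ux = (j * x * u + (j - 2) * u * z) /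
        ((j * x - (j - 2) * z) ^ 2 - (j - 2) ^ 2 * u ^ 2 * z) := by
  have hA : j * x * ux - u = (j - 2) * (ux * z + u * zx) := by
    linear_combination ((j - 2) * ha - j * hd) / 2
  have hB : j * x * zx - 2 * z = (j - 2) * (z * u * ux + z * zx) := by
    linear_combination ((j - 2) * hb - j * hc) / 2
  constructor
  · rw [eq_div_iff hD]
    linear_combination (j * x - (j - 2) * z) * hB + (j - 2) * z * u * hA
  · rw [eq_div_iff hD]
    linear_combination (j * x - (j - 2) * z) * hA + (j - 2) * u * hB
end
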